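/- Let the elliptic curve be y² = P₄(x) with P₄ monic quartic, and let the variable curve be y = −x² + b₁x + b₂. If (x₁,y₁) and (x₂,y₂) are two intersection points with x₁ ≠ x₂, so that b₁ = (y₁−y₂)/(x₁−x₂) + x₁ + x₂ and b₂ = (x₁y₂−x₂y₁)/(x₁−x₂) − x₁x₂, then the third intersection point has x-coordinate x₃ = (b₁² − 2b₂ − a₂)/(2b₁ + a₃) − x₁ − x₂ (assuming 2b₁ + a₃ ≠ 0), where P₄(x) = x⁴ + a₃x³ + a₂x² + a₁x + a₀; that is, P₄(x₃) = (−x₃² + b₁x₃ + b₂)². -/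
import Mathlib

set_option maxHeartbeats 1000000

/-- Group law via Abel's theorem: if `(x₁,y₁)` and `(x₂,y₂)` with `x₁ ≠ x₂` lie on the
quartic curve `y² = P₄(x) = x⁴ + a₃x³ + a₂x² + a₁x + a₀`, and
`b₁ = (y₁−y₂)/(x₁−x₂) + x₁ + x₂`, `b₂ = (x₁y₂−x₂y₁)/(x₁−x₂) − x₁x₂` are the coefficients
of the variable curve `y = −x² + b₁x + b₂` through these points, then the third
intersection point has `x`-coordinate `x₃ = (b₁² − 2b₂ − a₂)/(2b₁ + a₃) − x₁ − x₂`
(assuming `2b₁ + a₃ ≠ 0`), i.e. `P₄(x₃) = (−x₃² + b₁x₃ + b₂)²`. -/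
theorem third_intersection_point (a₀ a₁ a₂ a₃ x₁ x₂ y₁ y₂ : ℂ) (hx : x₁ ≠ x₂)
    (h₁ : y₁ ^ 2 = x₁ ^ 4 + a₃ * x₁ ^ 3 + a₂ * x₁ ^ 2 + a₁ * x₁ + a₀)
    (h₂ : y₂ ^ 2 = x₂ ^ 4 + a₃ * x₂ ^ 3 + a₂ * x₂ ^ 2 + a₁ * x₂ + a₀) :
    letI b₁ : ℂ := (y₁ - y₂) / (x₁ - x₂) + x₁ + x₂
    letI b₂ : ℂ := (x₁ * y₂ - x₂ * y₁) / (x₁ - x₂) - x₁ * x₂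
    ∀ _ : 2 * b₁ + a₃ ≠ 0,
    letI x₃ : ℂ := (b₁ ^ 2 - 2 * b₂ - a₂) / (2 * b₁ + a₃) - x₁ - x₂
    x₃ ^ 4 + a₃ * x₃ ^ 3 + a₂ * x₃ ^ 2 + a₁ * x₃ + a₀ = (-x₃ ^ 2 + b₁ * x₃ + b₂) ^ 2 := by
  have hd : x₁ - x₂ ≠ 0 := sub_ne_zero.mpr hx
  set b₁ : ℂ := (y₁ - y₂) / (x₁ - x₂) + x₁ + x₂ with hb₁
  set b₂ : ℂ := (x₁ * y₂ - x₂ * y₁) / (x₁ - x₂) - x₁ * x₂ with hb₂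
  -- the variable curve passes through the two points
  have hl₁ : -x₁ ^ 2 + b₁ * x₁ + b₂ = y₁ := by
    rw [hb₁, hb₂]; field_simp; ring
  have hl₂ : -x₂ ^ 2 + b₁ * x₂ + b₂ = y₂ := by
    rw [hb₁, hb₂]; field_simp; ring
  -- the two points are intersections of the curves
  have hc₁ : x₁ ^ 4 + a₃ * x₁ ^ 3 + a₂ * x₁ ^ 2 + a₁ * x₁ + a₀
      - (-x₁ ^ 2 + b₁ * x₁ + b₂) ^ 2 = 0 := by
    rw [hl₁, ← h₁]; ring
  have hc₂ : x₂ ^ 4 + a₃ * x₂ ^ 3 + a₂ * x₂ ^ 2 + a₁ * x₂ + a₀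
      - (-x₂ ^ 2 + b₁ * x₂ + b₂) ^ 2 = 0 := by
    rw [hl₂, ← h₂]; ring
  clear hb₁ hb₂ hl₁ hl₂ h₁ h₂
  clear_value b₁ b₂
  intro hs
  set s : ℂ := 2 * b₁ + a₃ with hsdef
  set x₃ : ℂ := (b₁ ^ 2 - 2 * b₂ - a₂) / s - x₁ - x₂ with hx₃
  set u : ℂ := (b₁ ^ 2 - 2 * b₂ - a₂) - s * (x₁ + x₂) with hu
  have hsx : s * x₃ = u := by
    rw [hx₃, hu]; field_simp; ring
  -- scaled Vieta / interpolation identity: purely polynomial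
  have key : (x₁ - x₂) * (u ^ 4 + a₃ * s * u ^ 3 + a₂ * s ^ 2 * u ^ 2 + a₁ * s ^ 3 * u
        + a₀ * s ^ 4 - (-u ^ 2 + b₁ * s * u + b₂ * s ^ 2) ^ 2)
      = s ^ 3 * ((u - s * x₂) * (x₁ ^ 4 + a₃ * x₁ ^ 3 + a₂ * x₁ ^ 2 + a₁ * x₁ + a₀
          - (-x₁ ^ 2 + b₁ * x₁ + b₂) ^ 2)
        - (u - s * x₁) * (x₂ ^ 4 + a₃ * x₂ ^ 3 + a₂ * x₂ ^ 2 + a₁ * x₂ + a₀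
          - (-x₂ ^ 2 + b₁ * x₂ + b₂) ^ 2)) := by
    rw [hu]; ring
  rw [hc₁, hc₂, mul_zero, mul_zero, sub_zero, mul_zero] at key
  have hCu : u ^ 4 + a₃ * s * u ^ 3 + a₂ * s ^ 2 * u ^ 2 + a₁ * s ^ 3 * u
      + a₀ * s ^ 4 - (-u ^ 2 + b₁ * s * u + b₂ * s ^ 2) ^ 2 = 0 :=
    (mul_eq_zero.mp key).resolve_left hd
  have h4 : s ^ 4 * (x₃ ^ 4 + a₃ * x₃ ^ 3 + a₂ * x₃ ^ 2 + a₁ * x₃ + a₀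
      - (-x₃ ^ 2 + b₁ * x₃ + b₂) ^ 2)
      = (s * x₃) ^ 4 + a₃ * s * (s * x₃) ^ 3 + a₂ * s ^ 2 * (s * x₃) ^ 2
        + a₁ * s ^ 3 * (s * x₃) + a₀ * s ^ 4
        - (-(s * x₃) ^ 2 + b₁ * s * (s * x₃) + b₂ * s ^ 2) ^ 2 := by ring
  rw [hsx, hCu] at h4
  have := (mul_eq_zero.mp h4).resolve_left (pow_ne_zero 4 hs)
  exact sub_eq_zero.mp this
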